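/- arXiv:2604.19065 — 4 statements merged into one kernel-verified Lean document; each statement's English description precedes it below -/
import Mathlib

section
/- Let β_t = (t + T₀)^{-b} with b ∈ (1/2, 1) and T₀ ≥ (2b)^{1/(1-b)}, T₀ ≥ 1. Then for all t ≥ 0, β_t - β_{t+1} ≤ (1/2)β_t². -/
open Real

theorem stepsize_difference_bound
    (b T₀ : ℝ) (hb₁ : 1 / 2 < b) (hb₂ : b < 1)
    (hT₁ : 1 ≤ T₀) (hT₂ : (2 * b) ^ (1 / (1 - b)) ≤ T₀)
    (β : ℕ → ℝ) (hβ : ∀ t : ℕ, β t = ((t : ℝ) + T₀) ^ (-b)) :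
    ∀ t : ℕ, β t - β (t + 1) ≤ 1 / 2 * (β t) ^ 2 := by
  intro t
  have hb0 : 0 < b := by linarith
  set x : ℝ := (t : ℝ) + T₀ with hx
  have hx1 : 1 ≤ x := by have : (0:ℝ) ≤ (t:ℝ) := Nat.cast_nonneg t; linarith
  have hx0 : 0 < x := by linarith
  have hu0 : 0 < 1 / x := by positivity
  have h1u : 0 < 1 + 1 / x := by linarith
  -- Step 1: 1 - b/x ≤ (1 + 1/x)^(-b)
  have key : (1 : ℝ) - b * (1 / x) ≤ (1 + 1 / x) ^ (-b) := by
    have hpos : 0 < (1 + 1 / x) ^ b := rpow_pos_of_pos h1u _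
    rcases le_or_gt 1 (b * (1 / x)) with h | h
    · have : (0 : ℝ) < (1 + 1 / x) ^ (-b) := rpow_pos_of_pos h1u _
      linarith
    · have hbern : (1 + 1 / x) ^ b ≤ 1 + b * (1 / x) :=
        rpow_one_add_le_one_add_mul_self (by linarith : (-1:ℝ) ≤ 1 / x) hb0.le hb₂.le
      have hmul : (1 - b * (1 / x)) * (1 + 1 / x) ^ b ≤ 1 := by
        calc (1 - b * (1 / x)) * (1 + 1 / x) ^ b
            ≤ (1 - b * (1 / x)) * (1 + b * (1 / x)) := by
              apply mul_le_mul_of_nonneg_left hbern; linarith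
          _ = 1 - (b * (1 / x))^2 := by ring
          _ ≤ 1 := by nlinarith
      have := (le_div_iff₀ hpos).mpr hmul
      rwa [rpow_neg h1u.le, ← one_div]
  -- Step 2
  have hsplit : ((t : ℝ) + 1 + T₀) ^ (-b) = x ^ (-b) * (1 + 1 / x) ^ (-b) := by
    rw [← mul_rpow hx0.le h1u.le]
    congr 1
    field_simp
    ring
  have hxb : 0 < x ^ (-b) := rpow_pos_of_pos hx0 _
  have step1 : β t - β (t + 1) ≤ x ^ (-b) * (b * (1 / x)) := by
    rw [hβ t, hβ (t + 1)]
    push_cast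
    rw [hsplit]
    have := mul_le_mul_of_nonneg_left key hxb.le
    nlinarith
  -- Step 3: 2b ≤ x^(1-b)
  have h2b0 : (0 : ℝ) < 2 * b := by linarith
  have hb1 : (0 : ℝ) < 1 - b := by linarith
  have h2b : (2 * b : ℝ) ≤ x ^ (1 - b) := by
    calc (2 * b : ℝ) = ((2 * b) ^ (1 / (1 - b))) ^ (1 - b) := by
          rw [← rpow_mul h2b0.le, one_div, inv_mul_cancel₀ hb1.ne', rpow_one]
      _ ≤ x ^ (1 - b) :=
          rpow_le_rpow (rpow_nonneg h2b0.le _) (le_trans hT₂ (by linarith)) hb1.le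
  have hxinv : (0 : ℝ) < x⁻¹ := by positivity
  have hxpow : x ^ (-b) = x ^ (1 - b) * x⁻¹ := by
    rw [← rpow_neg_one x, ← rpow_add hx0]
    congr 1
    ring
  have step2 : x ^ (-b) * (b * (1 / x)) ≤ 1 / 2 * (x ^ (-b)) ^ 2 := by
    have hkey : b * (1 / x) ≤ 1 / 2 * x ^ (-b) := by
      rw [hxpow, one_div]
      nlinarith
    calc x ^ (-b) * (b * (1 / x)) ≤ x ^ (-b) * (1 / 2 * x ^ (-b)) :=
          mul_le_mul_of_nonneg_left hkey hxb.le
      _ = 1 / 2 * (x ^ (-b)) ^ 2 := by ring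
  calc β t - β (t + 1) ≤ x ^ (-b) * (b * (1 / x)) := step1
    _ ≤ 1 / 2 * (x ^ (-b)) ^ 2 := step2
    _ = 1 / 2 * (β t) ^ 2 := by rw [hβ t]
end

section
/- Let (β_t)_{t≥0} be a sequence in (0,1] satisfying β_t - β_{t+1} ≤ (1/2)β_t² for all t, and define S_0 = 0 and S_{t+1} = (1 - β_t)S_t + β_t². Then S_t ≤ 2β_t for all t ≥ 0. -/
theorem S_le_two_beta
    (β S : ℕ → ℝ)
    (hβpos : ∀ t, 0 < β t) (hβle : ∀ t, β t ≤ 1)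
    (hβdiff : ∀ t, β t - β (t + 1) ≤ 1 / 2 * (β t) ^ 2)
    (hS0 : S 0 = 0)
    (hSrec : ∀ t, S (t + 1) = (1 - β t) * S t + (β t) ^ 2) :
    ∀ t, S t ≤ 2 * β t := by
  intro t
  induction t with
  | zero => rw [hS0]; linarith [hβpos 0]
  | succ t ih =>
    have h1 : (0:ℝ) ≤ 1 - β t := by linarith [hβle t]
    have h2 : (1 - β t) * S t ≤ (1 - β t) * (2 * β t) :=
      mul_le_mul_of_nonneg_left ih h1
    have := hβdiff t
    rw [hSrec t]
    nlinarith [hβpos t]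
end

section
/- Let (r_t), (β_t) be nonnegative sequences with β_t > 0, and suppose (i) ∑_{i=0}^{t} β_i r_i ≤ Γ₄ for all t, and (ii) r_i ≥ r_t - Γ₅ ∑_{j=i}^{t-1} β_j² for all i ≤ t-1. Then for all t, r_t · ∑_{i=0}^{t} β_i ≤ Γ₄ + Γ₅ ∑_{i=0}^{t-1} β_i ∑_{j=i}^{t-1} β_j². -/
theorem last_iterate_key_step
    (r β : ℕ → ℝ) (Γ₄ Γ₅ : ℝ) (hΓ₄ : 0 < Γ₄) (hΓ₅ : 0 < Γ₅)
    (hr : ∀ t, 0 ≤ r t) (hβ : ∀ t, 0 < β t)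
    (hsum : ∀ t, ∑ i ∈ Finset.range (t + 1), β i * r i ≤ Γ₄)
    (hlow : ∀ i t : ℕ, i ≤ t - 1 →
      r t - Γ₅ * ∑ j ∈ Finset.Ico i t, (β j) ^ 2 ≤ r i) :
    ∀ t, r t * ∑ i ∈ Finset.range (t + 1), β i ≤
      Γ₄ + Γ₅ * ∑ i ∈ Finset.range t, β i * ∑ j ∈ Finset.Ico i t, (β j) ^ 2 := by
  intro t
  have key : ∀ i ∈ Finset.range t,
      β i * r t ≤ β i * r i + Γ₅ * (β i * ∑ j ∈ Finset.Ico i t, (β j) ^ 2) := by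
    intro i hi
    rw [Finset.mem_range] at hi
    have h := hlow i t (Nat.le_pred_of_lt hi)
    have hβi := (hβ i).le
    nlinarith [mul_le_mul_of_nonneg_left (sub_le_iff_le_add.mp h) hβi]
  calc r t * ∑ i ∈ Finset.range (t + 1), β i
      = ∑ i ∈ Finset.range t, β i * r t + β t * r t := by
        rw [mul_comm, Finset.sum_mul, Finset.sum_range_succ]
    _ ≤ (∑ i ∈ Finset.range t, (β i * r i + Γ₅ * (β i * ∑ j ∈ Finset.Ico i t, (β j) ^ 2)))
          + β t * r t := by
        gcongr with i hi
        exact key i hi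
    _ = ∑ i ∈ Finset.range (t+1), β i * r i
          + Γ₅ * ∑ i ∈ Finset.range t, β i * ∑ j ∈ Finset.Ico i t, (β j) ^ 2 := by
        rw [Finset.sum_add_distrib, Finset.sum_range_succ, ← Finset.mul_sum]; ring
    _ ≤ Γ₄ + Γ₅ * ∑ i ∈ Finset.range t, β i * ∑ j ∈ Finset.Ico i t, (β j) ^ 2 := by
        gcongr; exact hsum t
end

section
/- Let -v be λ-co-coercive with λ > 0 and let 0 < β ≤ λ. For any u, w ∈ ℝ^n and points z, z' with z' = z + β(v(z) + e), it holds that ‖v(z')‖² ≤ ‖v(z)‖² - (2λ/β - 1)‖v(z') - v(z)‖² - 2⟨v(z') - v(z), e⟩ ≤ ‖v(z)‖² + (β/λ)‖e‖². -/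
open RealInnerProductSpace

theorem cocoercive_descent_step {n : ℕ}
    (v : EuclideanSpace ℝ (Fin n) → EuclideanSpace ℝ (Fin n))
    (lam : ℝ) (hlam : 0 < lam)
    (hcoco : ∀ x x' : EuclideanSpace ℝ (Fin n),
      ⟪x' - x, v x' - v x⟫ ≤ -lam * ‖v x' - v x‖ ^ 2)
    (β : ℝ) (hβ₁ : 0 < β) (hβ₂ : β ≤ lam)
    (z z' e : EuclideanSpace ℝ (Fin n))
    (hz' : z' = z + β • (v z + e)) :
    ‖v z'‖ ^ 2 ≤ ‖v z‖ ^ 2 - (2 * lam / β - 1) * ‖v z' - v z‖ ^ 2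
        - 2 * ⟪v z' - v z, e⟫ ∧
    ‖v z‖ ^ 2 - (2 * lam / β - 1) * ‖v z' - v z‖ ^ 2 - 2 * ⟪v z' - v z, e⟫ ≤
      ‖v z‖ ^ 2 + (β / lam) * ‖e‖ ^ 2 := by
  set a := v z with ha
  set b := v z' with hb
  set d := b - a with hd
  have hzz : z' - z = β • (a + e) := by rw [hz']; abel
  have hco := hcoco z z'
  rw [hzz] at hco
  have hinner : ⟪(β • (a + e) : EuclideanSpace ℝ (Fin n)), d⟫
      = β * (⟪a, d⟫ + ⟪e, d⟫) := by
    rw [real_inner_smul_left, inner_add_left]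
  rw [hinner] at hco
  have hnorm : ‖b‖ ^ 2 = ‖a‖ ^ 2 + 2 * ⟪a, d⟫ + ‖d‖ ^ 2 := by
    have : b = a + d := by rw [hd]; abel
    rw [this, @norm_add_sq_real]
  have hde : ⟪d, e⟫ = ⟪e, d⟫ := real_inner_comm e d
  have hdiv : (2 * lam / β - 1) * β = 2 * lam - β := by
    field_simp
  constructor
  · -- first inequality
    rw [hnorm, hde]
    nlinarith [hco, sq_nonneg ‖d‖, hβ₁]
  · -- second inequality
    have habs := abs_real_inner_le_norm d e
    have hcauchy : -(‖d‖ * ‖e‖) ≤ ⟪d, e⟫ := neg_le_of_abs_le habs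
    have h1 : (0:ℝ) ≤ (lam * ‖d‖ - β * ‖e‖) ^ 2 := sq_nonneg _
    have h2 : (0:ℝ) ≤ lam * (lam - β) * ‖d‖ ^ 2 :=
      mul_nonneg (mul_nonneg hlam.le (by linarith)) (sq_nonneg _)
    have h3 : (0:ℝ) ≤ ⟪d, e⟫ + ‖d‖ * ‖e‖ := by linarith
    have hlb : (0:ℝ) < lam * β := mul_pos hlam hβ₁
    have key : (0:ℝ) ≤ (2 * lam - β) * lam * ‖d‖ ^ 2 + 2 * (lam * β) * ⟪d, e⟫
        + β ^ 2 * ‖e‖ ^ 2 := by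
      nlinarith [h1, h2, mul_nonneg hlb.le h3]
    rw [← sub_nonneg]
    have expand : ‖a‖ ^ 2 + β / lam * ‖e‖ ^ 2
        - (‖a‖ ^ 2 - (2 * lam / β - 1) * ‖d‖ ^ 2 - 2 * ⟪d, e⟫)
        = ((2 * lam - β) * lam * ‖d‖ ^ 2 + 2 * (lam * β) * ⟪d, e⟫
            + β ^ 2 * ‖e‖ ^ 2) / (lam * β) := by
      field_simp
      ring
    rw [expand]
    exact div_nonneg key hlb.le
end
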